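/- arXiv:0812.4637 — 2 statements merged into one kernel-verified Lean document; each statement's English description precedes it below -/
import Mathlib

section
/- Let k_1 ≤ k_2 ≤ ... ≤ k_m be positive integers, let d be an integer with 1 ≤ d ≤ m and Σ_{i=1}^d k_i > (d-1)·k_d, let s_1, ..., s_d be non-negative integers, and let J_0 be a subset of { i : d < i ≤ m } such that Σ_{i=1}^d s_i·k_i = Σ_{i=1}^d k_i + Σ_{i ∈ J_0} k_i. Then Σ_{i=1}^d s_i ≥ d + |J_0|. -/
/-! Bound every weight `k i`, `i < d`, from above and every `k j`, `j ∈ J₀`, from below by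
`K = k (d-1)`.  The weighted sum then gives `(d - 1 + |J₀|) K < (∑ s i) K`; cancelling `K` and
using integrality yields `∑ s i ≥ d + |J₀|`. -/

open Finset

theorem card_add_card_le_sum_of_sum_mul_eq {ι : Type*} (A J : Finset ι) (k s : ι → ℕ) (K : ℕ)
    (hA : ∀ i ∈ A, k i ≤ K) (hJ : ∀ j ∈ J, K ≤ k j)
    (hbig : (#A - 1) * K < ∑ i ∈ A, k i)
    (hsum : ∑ i ∈ A, s i * k i = ∑ i ∈ A, k i + ∑ j ∈ J, k j) :
    #A + #J ≤ ∑ i ∈ A, s i := by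
  have key : (#A - 1 + #J) * K < (∑ i ∈ A, s i) * K :=
    calc (#A - 1 + #J) * K = (#A - 1) * K + #J • K := by rw [add_mul, smul_eq_mul]
      _ < ∑ i ∈ A, k i + ∑ j ∈ J, k j := Nat.add_lt_add_of_lt_of_le hbig (card_nsmul_le_sum J k K hJ)
      _ = ∑ i ∈ A, s i * k i := hsum.symm
      _ ≤ ∑ i ∈ A, s i * K := sum_le_sum fun i hi => Nat.mul_le_mul_left _ (hA i hi)
      _ = (∑ i ∈ A, s i) * K := (sum_mul ..).symm
  obtain rfl | hA_nonempty := A.eq_empty_or_nonempty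
  · simp at hbig
  have := Nat.lt_of_mul_lt_mul_right key
  have := hA_nonempty.card_pos
  omega

theorem stmt3_general (m d : ℕ) (hdm : d ≤ m) (k s : ℕ → ℕ)
    (hkmono : ∀ i j, i ≤ j → j < m → k i ≤ k j)
    (hbig : (d - 1) * k (d - 1) < ∑ i ∈ Finset.range d, k i)
    (J₀ : Finset ℕ) (hJ₀ : ∀ i ∈ J₀, d ≤ i ∧ i < m)
    (hsum : ∑ i ∈ Finset.range d, s i * k i
      = ∑ i ∈ Finset.range d, k i + ∑ i ∈ J₀, k i) :
    d + J₀.card ≤ ∑ i ∈ Finset.range d, s i := by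
  have h := card_add_card_le_sum_of_sum_mul_eq (range d) J₀ k s (k (d - 1))
    (fun i hi => hkmono i (d - 1) (by grind) (by grind))
    (fun j hj => hkmono (d - 1) j (by grind) (hJ₀ j hj).2)
    (by rwa [card_range]) hsum
  rwa [card_range] at h

/-- Chain of inequalities in the proof of Theorem `t:reallength2`: indices
`0, …, m-1` here correspond to `1, …, m` in the paper.  If `k` is nondecreasing
and positive on `{0, …, m-1}`, `1 ≤ d ≤ m`, `∑_{i<d} k i > (d-1) * k (d-1)`,
`J₀ ⊆ {i | d ≤ i < m}`, and `∑_{i<d} s i * k i = ∑_{i<d} k i + ∑_{i∈J₀} k i`,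
then `∑_{i<d} s i ≥ d + |J₀|`. -/
theorem stmt3 (m d : ℕ) (hd1 : 1 ≤ d) (hdm : d ≤ m) (k s : ℕ → ℕ)
    (hkpos : ∀ i, i < m → 0 < k i)
    (hkmono : ∀ i j, i ≤ j → j < m → k i ≤ k j)
    (hbig : (d - 1) * k (d - 1) < ∑ i ∈ Finset.range d, k i)
    (J₀ : Finset ℕ) (hJ₀ : ∀ i ∈ J₀, d ≤ i ∧ i < m)
    (hsum : ∑ i ∈ Finset.range d, s i * k i
      = ∑ i ∈ Finset.range d, k i + ∑ i ∈ J₀, k i) :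
    d + J₀.card ≤ ∑ i ∈ Finset.range d, s i :=
  stmt3_general m d hdm k s hkmono hbig J₀ hJ₀ hsum
end

section
/- Let k_1 ≤ k_2 ≤ ... ≤ k_m be positive integers and let d be an integer with 1 ≤ d ≤ m such that Σ_{i=1}^d k_i > (d-1)·k_d. Then every m-tuple (s_1, ..., s_m) of non-negative integers satisfying s_i ≤ 1 for all i with d < i ≤ m and Σ_{i=1}^m s_i·k_i = Σ_{i=1}^m k_i has Σ_{i=1}^m s_i ≥ m. -/
/-!
Let `c = k_d`. Weights `k i ≤ c` in the first block and `c ≤ k i` in the tail turn the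
weighted identity into a counting inequality: the mass `∑_{i ≤ d} (s_i - 1) k_i` the first
block gains must equal the mass `∑_{i > d, s_i = 0} k_i` the tail loses, which is at least
`c` times the number of tail indices with `s_i = 0`. Since `∑_{i ≤ d} k_i > (d - 1) c`,
dividing by `c` shows the first block has `∑_{i ≤ d} s_i ≥ d + #{i > d | s_i = 0}`, which
exactly compensates for the tail.
-/

open Finset

variable {ι : Type*}

theorem card_add_sum_le_sum_of_sum_mul_eq (A B : Finset ι) (k s t : ι → ℕ) (c : ℕ)
    (hA : ∀ i ∈ A, k i ≤ c) (hB : ∀ i ∈ B, c ≤ k i)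
    (hbig : (#A - 1) * c < ∑ i ∈ A, k i)
    (heq : ∑ i ∈ A, s i * k i = ∑ i ∈ A, k i + ∑ i ∈ B, t i * k i) :
    #A + ∑ i ∈ B, t i ≤ ∑ i ∈ A, s i := by
  have hA_pos : 0 < #A :=
    card_pos.mpr (nonempty_of_sum_ne_zero (Nat.ne_zero_of_lt hbig))
  have upper : ∑ i ∈ A, s i * k i ≤ (∑ i ∈ A, s i) * c := by
    rw [sum_mul]
    gcongr with i hi
    exact hA i hi
  have lower : (∑ i ∈ B, t i) * c ≤ ∑ i ∈ B, t i * k i := by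
    rw [sum_mul]
    gcongr with i hi
    exact hB i hi
  have hlt : (#A - 1 + ∑ i ∈ B, t i) * c < (∑ i ∈ A, s i) * c :=
    calc (#A - 1 + ∑ i ∈ B, t i) * c = (#A - 1) * c + (∑ i ∈ B, t i) * c := add_mul ..
      _ < ∑ i ∈ A, k i + ∑ i ∈ B, t i * k i := Nat.add_lt_add_of_lt_of_le hbig lower
      _ ≤ (∑ i ∈ A, s i) * c := heq ▸ upper
  have := Nat.lt_of_mul_lt_mul_right hlt
  omega

theorem card_add_card_le_sum_add_sum (A B : Finset ι) (k s : ι → ℕ) (c : ℕ)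
    (hA : ∀ i ∈ A, k i ≤ c) (hB : ∀ i ∈ B, c ≤ k i)
    (hbig : (#A - 1) * c < ∑ i ∈ A, k i) (hs : ∀ i ∈ B, s i ≤ 1)
    (hsum : ∑ i ∈ A, s i * k i + ∑ i ∈ B, s i * k i = ∑ i ∈ A, k i + ∑ i ∈ B, k i) :
    #A + #B ≤ ∑ i ∈ A, s i + ∑ i ∈ B, s i := by
  have hcount : ∑ i ∈ B, s i + ∑ i ∈ B, (1 - s i) = #B := by
    rw [← sum_add_distrib, card_eq_sum_ones]
    exact sum_congr rfl fun i hi => by have := hs i hi; omega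
  have hmass : ∑ i ∈ B, s i * k i + ∑ i ∈ B, (1 - s i) * k i = ∑ i ∈ B, k i := by
    rw [← sum_add_distrib]
    exact sum_congr rfl fun i hi => by rw [← add_mul, Nat.add_sub_cancel' (hs i hi), one_mul]
  have := card_add_sum_le_sum_of_sum_mul_eq A B k s (fun i => 1 - s i) c hA hB hbig (by omega)
  omega

/-- Indices `0, …, m-1` correspond to `1, …, m` in the paper, so `k (d - 1)` is `k_d`. -/
theorem stmt4_general (m d : ℕ) (hdm : d ≤ m) (k : ℕ → ℕ)
    (hkmono : ∀ i j, i ≤ j → j < m → k i ≤ k j)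
    (hbig : (d - 1) * k (d - 1) < ∑ i ∈ Finset.range d, k i)
    (s : ℕ → ℕ) (hs1 : ∀ i, d ≤ i → i < m → s i ≤ 1)
    (hsum : ∑ i ∈ Finset.range m, s i * k i = ∑ i ∈ Finset.range m, k i) :
    m ≤ ∑ i ∈ Finset.range m, s i := by
  have hd : d ≠ 0 := by
    rintro rfl
    simp at hbig
  have hsplit (f : ℕ → ℕ) := (sum_range_add_sum_Ico f hdm).symm
  have key := card_add_card_le_sum_add_sum (range d) (Ico d m) k s (k (d - 1))
    (fun i hi => hkmono i (d - 1) (by simp at hi; omega) (by omega))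
    (fun i hi => hkmono (d - 1) i (by simp at hi; omega) (by simp at hi; omega))
    (by rwa [card_range])
    (fun i hi => hs1 i (mem_Ico.mp hi).1 (mem_Ico.mp hi).2)
    (by rwa [hsplit, hsplit] at hsum)
  rw [card_range, Nat.card_Ico] at key
  rw [hsplit]
  omega

/-- Full combinatorial core of Theorem `t:reallength2`: indices `0, …, m-1` here
correspond to `1, …, m` in the paper.  If `k` is nondecreasing and positive on
`{0, …, m-1}`, `1 ≤ d ≤ m`, and `∑_{i<d} k i > (d-1) * k (d-1)`, then every
tuple of non-negative integers `s` with `s i ≤ 1` for `d ≤ i < m` and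
`∑_{i<m} s i * k i = ∑_{i<m} k i` satisfies `∑_{i<m} s i ≥ m`. -/
theorem stmt4 (m d : ℕ) (hd1 : 1 ≤ d) (hdm : d ≤ m) (k : ℕ → ℕ)
    (hkpos : ∀ i, i < m → 0 < k i)
    (hkmono : ∀ i j, i ≤ j → j < m → k i ≤ k j)
    (hbig : (d - 1) * k (d - 1) < ∑ i ∈ Finset.range d, k i)
    (s : ℕ → ℕ) (hs1 : ∀ i, d ≤ i → i < m → s i ≤ 1)
    (hsum : ∑ i ∈ Finset.range m, s i * k i = ∑ i ∈ Finset.range m, k i) :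
    m ≤ ∑ i ∈ Finset.range m, s i :=
  stmt4_general m d hdm k hkmono hbig s hs1 hsum
end
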